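/- (Boundary squash identity.) Let n ≥ 2 and q ≥ 1, let Ω ⊂ H ∩ B₁ be open, and let v = (v¹,…,v^q) : closure(Ω) → ℝ^q be C¹ up to the boundary on closure(Ω), with v = 0 at every point of closure(Ω) ∩ ∂H. Assume the interior squash identity: for every C¹ function ζ : ℝⁿ → ℝ such that spt ζ ∩ closure(Ω) is a compact subset of Ω, one has ∫_Ω |Dv|² ζ = − ∫_Ω Σ_{α=1}^q v^α Dv^α · Dζ. Then for every C¹ function ζ : ℝⁿ → ℝ whose support is compact, contained in B₁, and satisfies spt ζ ∩ closure(Ω) ⊂ Ω ∪ ∂H, the same identity ∫_Ω |Dv|² ζ = − ∫_Ω Σ_{α=1}^q v^α Dv^α · Dζ holds. -/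

import Mathlib

open MeasureTheory Metric Set Filter

section helpers

lemma deriv_smoothTransition_eq_zero (t : ℝ) (ht : t ∉ Set.Icc (0:ℝ) 1) :
    deriv Real.smoothTransition t = 0 := by
  rw [Set.mem_Icc, not_and_or, not_le, not_le] at ht
  rcases ht with h | h
  · have : Real.smoothTransition =ᶠ[nhds t] (fun _ => (0:ℝ)) := by
      filter_upwards [Iio_mem_nhds h] with s hs
      exact Real.smoothTransition.zero_of_nonpos (le_of_lt hs)
    rw [this.deriv_eq, deriv_const]
  · have : Real.smoothTransition =ᶠ[nhds t] (fun _ => (1:ℝ)) := by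
      filter_upwards [Ioi_mem_nhds h] with s hs
      exact Real.smoothTransition.one_of_one_le (le_of_lt hs)
    rw [this.deriv_eq, deriv_const]

lemma deriv_smoothTransition_bound : ∃ M : ℝ, 0 ≤ M ∧ ∀ t, |deriv Real.smoothTransition t| ≤ M := by
  have hc : Continuous (deriv Real.smoothTransition) :=
    (Real.smoothTransition.contDiff (n := (2:ℕ∞))).continuous_deriv one_le_two
  have hcs : HasCompactSupport (deriv Real.smoothTransition) :=
    HasCompactSupport.intro isCompact_Icc deriv_smoothTransition_eq_zero
  obtain ⟨M, hM⟩ := hcs.exists_bound_of_continuous hc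
  exact ⟨M, le_trans (abs_nonneg _) (hM 0), fun t => hM t⟩

lemma small_on_thin {X : Type*} [MetricSpace X] {K : Set X} (hK : IsCompact K)
    {f : X → ℝ} (hf : ContinuousOn f K) {p : X → ℝ} (hp : Continuous p)
    (hp0 : ∀ x ∈ K, 0 ≤ p x) (h0 : ∀ x ∈ K, p x = 0 → f x = 0) {δ : ℝ} (hδ : 0 < δ) :
    ∃ r > 0, ∀ x ∈ K, p x < r → |f x| ≤ δ := by
  by_contra hcon
  push_neg at hcon
  have hex : ∀ j : ℕ, ∃ x, x ∈ K ∧ p x < 1/(j+1) ∧ δ < |f x| := by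
    intro j
    obtain ⟨x, hxK, hxp, hxf⟩ := hcon (1/(j+1)) (by positivity)
    exact ⟨x, hxK, hxp, hxf⟩
  choose x hxK hxp hxf using hex
  obtain ⟨a, haK, φ, hφ, hconv⟩ := hK.tendsto_subseq hxK
  have hpa : Filter.Tendsto (fun j => p (x (φ j))) atTop (nhds (p a)) :=
    (hp.tendsto a).comp hconv
  have hpa0 : Filter.Tendsto (fun j => p (x (φ j))) atTop (nhds 0) := by
    apply squeeze_zero (fun j => hp0 _ (hxK _)) (fun j => le_of_lt (hxp (φ j)))
    have : Filter.Tendsto (fun j : ℕ => 1/((j:ℝ)+1)) atTop (nhds 0) :=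
      tendsto_one_div_add_atTop_nhds_zero_nat
    exact this.comp hφ.tendsto_atTop
  have hpaeq : p a = 0 := tendsto_nhds_unique hpa hpa0
  have hfa : f a = 0 := h0 a haK hpaeq
  have hfconv : Filter.Tendsto (fun j => f (x (φ j))) atTop (nhds (f a)) := by
    have := (hf a haK).tendsto
    refine this.comp ?_
    exact tendsto_nhdsWithin_iff.2 ⟨hconv, Filter.Eventually.of_forall fun j => hxK _⟩
  have : δ ≤ |f a| := by
    have habs : Filter.Tendsto (fun j => |f (x (φ j))|) atTop (nhds (|f a|)) := hfconv.abs
    exact ge_of_tendsto' habs (fun j => (hxf (φ j)).le)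
  rw [hfa] at this
  simp at this
  linarith


lemma euclidean_volume_pi (n : ℕ) (s : Fin n → Set ℝ) :
    volume {x : EuclideanSpace ℝ (Fin n) | ∀ i, x i ∈ s i} = ∏ i, volume (s i) := by
  have h := (EuclideanSpace.volume_preserving_symm_measurableEquiv_toLp (Fin n)).measure_preimage_equiv
      (Set.pi Set.univ s)
  rw [← volume_pi_pi s, ← h]
  congr 1
  ext x
  simp [Set.mem_pi]

lemma strip_volume (n : ℕ) (i0 : Fin n) (ε : ℝ) (hε : 0 < ε) :
    volume {x : EuclideanSpace ℝ (Fin n) | (0 < x i0 ∧ x i0 ≤ ε) ∧ ∀ i, |x i| < 1}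
      ≤ ENNReal.ofReal ε * (ENNReal.ofReal 2) ^ (n - 1) := by
  classical
  set s : Fin n → Set ℝ := fun i => if i = i0 then Set.Ioc 0 ε else Set.Ioo (-1) 1 with hs
  have hsub : {x : EuclideanSpace ℝ (Fin n) | (0 < x i0 ∧ x i0 ≤ ε) ∧ ∀ i, |x i| < 1}
      ⊆ {x : EuclideanSpace ℝ (Fin n) | ∀ i, x i ∈ s i} := by
    intro x hx i
    rcases hx with ⟨⟨h1, h2⟩, h3⟩
    by_cases hi : i = i0
    · subst hi; simp [hs, Set.mem_Ioc, h1, h2]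
    · have := abs_lt.1 (h3 i)
      simp [hs, hi, Set.mem_Ioo, this.1, this.2]
  refine le_trans (measure_mono hsub) ?_
  rw [euclidean_volume_pi]
  rw [← Finset.mul_prod_erase Finset.univ _ (Finset.mem_univ i0)]
  have h1 : volume (s i0) = ENNReal.ofReal ε := by simp [hs, Real.volume_Ioc]
  have h2 : ∏ i ∈ Finset.univ.erase i0, volume (s i) = (ENNReal.ofReal 2) ^ (n - 1) := by
    rw [Finset.prod_congr rfl (fun i hi => ?_), Finset.prod_const,
      Finset.card_erase_of_mem (Finset.mem_univ i0), Finset.card_univ, Fintype.card_fin]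
    have : i ≠ i0 := Finset.ne_of_mem_erase hi
    simp [hs, this, Real.volume_Ioo]
    norm_num
  rw [h1, h2]

lemma abs_coord_le_norm {n : ℕ} (x : EuclideanSpace ℝ (Fin n)) (i : Fin n) : |x i| ≤ ‖x‖ := by
  have h : x i = (inner ℝ (EuclideanSpace.single i (1:ℝ)) x : ℝ) := by
    rw [EuclideanSpace.inner_single_left]; simp
  rw [h]
  calc |(inner ℝ (EuclideanSpace.single i (1:ℝ)) x : ℝ)| ≤ ‖EuclideanSpace.single i (1:ℝ)‖ * ‖x‖ :=
        abs_real_inner_le_norm _ _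
    _ = ‖x‖ := by rw [EuclideanSpace.norm_single]; simp

end helpers

set_option maxHeartbeats 2000000 in
/-- Boundary squash identity: if `v : closure Ω → ℝ^q` is C¹ up to the boundary
(`Ω ⊆ H ∩ B₁` open, `H = {x¹ > 0}`), vanishes on `closure Ω ∩ ∂H`, and satisfies the
squash identity for all C¹ test functions whose support meets `closure Ω` in a compact
subset of `Ω`, then the squash identity also holds for all compactly supported C¹ test
functions supported in `B₁` whose support meets `closure Ω` only inside `Ω ∪ ∂H`. -/
theorem boundary_squash_identity
    (n q : ℕ) (hn : 2 ≤ n) (hq : 1 ≤ q)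
    (Ω : Set (EuclideanSpace ℝ (Fin n)))
    (hΩ_open : IsOpen Ω)
    (hΩ_sub : Ω ⊆ {x : EuclideanSpace ℝ (Fin n) | 0 < x ⟨0, by omega⟩} ∩ ball 0 1)
    (v : EuclideanSpace ℝ (Fin n) → Fin q → ℝ)
    (Dv : EuclideanSpace ℝ (Fin n) → Fin q → (EuclideanSpace ℝ (Fin n) →L[ℝ] ℝ))
    (hv_cont : ContinuousOn v (closure Ω))
    (hv_deriv : ∀ x ∈ interior (closure Ω), ∀ α, HasFDerivAt (fun y => v y α) (Dv x α) x)
    (hDv_cont : ContinuousOn Dv (closure Ω))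
    (hv_bdry : ∀ x ∈ closure Ω, x ⟨0, by omega⟩ = 0 → v x = 0)
    (h_squash_int : ∀ ζ : EuclideanSpace ℝ (Fin n) → ℝ, ContDiff ℝ 1 ζ →
      IsCompact (tsupport ζ ∩ closure Ω) → tsupport ζ ∩ closure Ω ⊆ Ω →
      ∫ x in Ω, (∑ α, ∑ i, (Dv x α (EuclideanSpace.single i (1 : ℝ))) ^ 2) * ζ x
        = - ∫ x in Ω, ∑ α, v x α *
            ∑ i, Dv x α (EuclideanSpace.single i (1 : ℝ)) *
              fderiv ℝ ζ x (EuclideanSpace.single i (1 : ℝ))) :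
    ∀ ζ : EuclideanSpace ℝ (Fin n) → ℝ, ContDiff ℝ 1 ζ → HasCompactSupport ζ →
      tsupport ζ ⊆ ball 0 1 →
      tsupport ζ ∩ closure Ω ⊆ Ω ∪ {x : EuclideanSpace ℝ (Fin n) | x ⟨0, by omega⟩ = 0} →
      ∫ x in Ω, (∑ α, ∑ i, (Dv x α (EuclideanSpace.single i (1 : ℝ))) ^ 2) * ζ x
        = - ∫ x in Ω, ∑ α, v x α *
            ∑ i, Dv x α (EuclideanSpace.single i (1 : ℝ)) *
              fderiv ℝ ζ x (EuclideanSpace.single i (1 : ℝ)) := by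
  classical
  intro ζ hζ hζc hζball hζbd
  set i0 : Fin n := ⟨0, by omega⟩ with hi0def
  -- basic facts
  have hΩm : MeasurableSet Ω := hΩ_open.measurableSet
  have hΩball : Ω ⊆ ball (0 : EuclideanSpace ℝ (Fin n)) 1 := fun x hx => (hΩ_sub hx).2
  have hΩpos : ∀ x ∈ Ω, 0 < x i0 := fun x hx => (hΩ_sub hx).1
  have hclpos : ∀ x ∈ closure Ω, 0 ≤ x i0 := by
    intro x hx
    have hcl : closure Ω ⊆ {x : EuclideanSpace ℝ (Fin n) | 0 ≤ x i0} :=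
      closure_minimal (fun y hy => (hΩpos y hy).le)
        (isClosed_le continuous_const (EuclideanSpace.proj i0).continuous)
    exact hcl hx
  have hclΩ : IsCompact (closure Ω) := by
    have hb : Bornology.IsBounded Ω := (isBounded_ball).subset hΩball
    exact hb.isCompact_closure
  have hfinΩ : volume Ω < ⊤ :=
    lt_of_le_of_lt (measure_mono hΩball) measure_ball_lt_top
  have hfinM : IsFiniteMeasure (volume.restrict Ω) :=
    ⟨by rw [Measure.restrict_apply_univ]; exact hfinΩ⟩
  -- integrability from continuity on closure
  have integrable_of_contOn : ∀ f : EuclideanSpace ℝ (Fin n) → ℝ, ContinuousOn f (closure Ω) →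
      Integrable f (volume.restrict Ω) := by
    intro f hf
    obtain ⟨C, hC⟩ := hclΩ.exists_bound_of_continuousOn hf
    refine Integrable.mono' (integrable_const C)
      ((hf.mono subset_closure).aestronglyMeasurable hΩm) ?_
    exact (ae_restrict_iff' hΩm).2 (Filter.Eventually.of_forall fun x hx => hC x (subset_closure hx))
  -- continuity pieces
  have hfdζ : Continuous (fderiv ℝ ζ) := hζ.continuous_fderiv one_ne_zero
  have hvα : ∀ α : Fin q, ContinuousOn (fun x => v x α) (closure Ω) :=
    fun α => (continuous_apply α).comp_continuousOn hv_cont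
  have hDvα : ∀ (α : Fin q) (u : EuclideanSpace ℝ (Fin n)), ContinuousOn (fun x => Dv x α u) (closure Ω) :=
    fun α u => (ContinuousLinearMap.apply ℝ ℝ u).continuous.comp_continuousOn
      ((continuous_apply α).comp_continuousOn hDv_cont)
  -- named functions
  set P : EuclideanSpace ℝ (Fin n) → ℝ := fun x => ∑ α, ∑ i, (Dv x α (EuclideanSpace.single i (1:ℝ)))^2 with hPdef
  set g : EuclideanSpace ℝ (Fin n) → ℝ := fun x => ∑ α, v x α * ∑ i, Dv x α (EuclideanSpace.single i (1:ℝ)) *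
      fderiv ℝ ζ x (EuclideanSpace.single i (1:ℝ)) with hgdef
  set dσ : ℝ → ℝ := deriv Real.smoothTransition with hdσdef
  set χ : ℕ → EuclideanSpace ℝ (Fin n) → ℝ := fun k x => Real.smoothTransition (((k:ℝ)+1) * x i0 - 1) with hχdef
  set e : ℕ → EuclideanSpace ℝ (Fin n) → ℝ := fun k x => (∑ α, v x α * Dv x α (EuclideanSpace.single i0 (1:ℝ))) *
      (ζ x * (((k:ℝ)+1) * dσ (((k:ℝ)+1) * x i0 - 1))) with hedef
  have hP_cont : ContinuousOn P (closure Ω) := by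
    apply continuousOn_finset_sum; intro α _
    apply continuousOn_finset_sum; intro i _
    exact (hDvα α _).pow 2
  have hg_cont : ContinuousOn g (closure Ω) := by
    apply continuousOn_finset_sum; intro α _
    refine (hvα α).mul ?_
    apply continuousOn_finset_sum; intro i _
    exact (hDvα α _).mul ((ContinuousLinearMap.apply ℝ ℝ _).continuous.comp hfdζ).continuousOn
  have hdσ_cont : Continuous dσ :=
    (Real.smoothTransition.contDiff (n := (2:ℕ∞))).continuous_deriv one_le_two
  have hχ_cont : ∀ k, Continuous (χ k) := by
    intro k
    exact Real.smoothTransition.continuous.comp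
      (((EuclideanSpace.proj i0).continuous.const_smul ((k:ℝ)+1)).sub continuous_const)
  have he_cont : ∀ k, ContinuousOn (e k) (closure Ω) := by
    intro k
    refine ContinuousOn.mul (continuousOn_finset_sum _ fun α _ => (hvα α).mul (hDvα α _)) ?_
    exact (hζ.continuous.mul ((continuous_const.mul (hdσ_cont.comp
      (((EuclideanSpace.proj i0).continuous.const_smul ((k:ℝ)+1)).sub continuous_const))))).continuousOn
  have hχ01 : ∀ k x, 0 ≤ χ k x ∧ χ k x ≤ 1 := fun k x =>
    ⟨Real.smoothTransition.nonneg _, Real.smoothTransition.le_one _⟩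
  -- the key identity for each k
  have key : ∀ k : ℕ, (∫ x in Ω, P x * ζ x * χ k x)
      = -((∫ x in Ω, g x * χ k x) + ∫ x in Ω, e k x) := by
    intro k
    have hkpos : (0:ℝ) < (k:ℝ)+1 := by positivity
    set ζk : EuclideanSpace ℝ (Fin n) → ℝ := fun y => ζ y * χ k y with hζkdef
    -- derivative of χ k
    have hχd : ∀ x : EuclideanSpace ℝ (Fin n), HasFDerivAt (χ k)
        ((((k:ℝ)+1) * dσ (((k:ℝ)+1) * x i0 - 1)) •
          (EuclideanSpace.proj i0 : EuclideanSpace ℝ (Fin n) →L[ℝ] ℝ)) x := by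
      intro x
      have h0 : HasFDerivAt (fun y : EuclideanSpace ℝ (Fin n) => y i0)
          (EuclideanSpace.proj i0 : EuclideanSpace ℝ (Fin n) →L[ℝ] ℝ) x := by
        have h := (EuclideanSpace.proj (𝕜 := ℝ) i0).hasFDerivAt (x := x)
        exact h
      have h1 : HasFDerivAt (fun y : EuclideanSpace ℝ (Fin n) => ((k:ℝ)+1) * y i0 - 1)
          (((k:ℝ)+1) • (EuclideanSpace.proj i0 : EuclideanSpace ℝ (Fin n) →L[ℝ] ℝ)) x :=
        (h0.const_mul ((k:ℝ)+1)).sub_const 1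
      have h2 : HasDerivAt Real.smoothTransition (dσ (((k:ℝ)+1) * x i0 - 1))
          (((k:ℝ)+1) * x i0 - 1) :=
        ((Real.smoothTransition.contDiff (n := (1:ℕ∞))).differentiable (by simp) _).hasDerivAt
      have h3 := h2.comp_hasFDerivAt x h1
      have h4 : (Real.smoothTransition ∘ fun y : EuclideanSpace ℝ (Fin n) =>
          ((k:ℝ)+1) * y i0 - 1) = χ k := rfl
      rw [h4, smul_smul, mul_comm] at h3
      exact h3
    have hζkd : ∀ x : EuclideanSpace ℝ (Fin n), HasFDerivAt ζk
        (ζ x • ((((k:ℝ)+1) * dσ (((k:ℝ)+1) * x i0 - 1)) •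
            (EuclideanSpace.proj i0 : EuclideanSpace ℝ (Fin n) →L[ℝ] ℝ))
          + χ k x • (fderiv ℝ ζ x)) x :=
      fun x => ((hζ.differentiable one_ne_zero x).hasFDerivAt).mul (hχd x)
    have happ : ∀ (x : EuclideanSpace ℝ (Fin n)) (i : Fin n),
        fderiv ℝ ζk x (EuclideanSpace.single i (1:ℝ))
        = χ k x * fderiv ℝ ζ x (EuclideanSpace.single i (1:ℝ))
          + ζ x * ((((k:ℝ)+1) * dσ (((k:ℝ)+1) * x i0 - 1)) * (if i = i0 then 1 else 0)) := by
      intro x i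
      rw [(hζkd x).fderiv]
      rw [ContinuousLinearMap.add_apply, ContinuousLinearMap.smul_apply,
        ContinuousLinearMap.smul_apply, ContinuousLinearMap.smul_apply]
      have hproj : (EuclideanSpace.proj i0 : EuclideanSpace ℝ (Fin n) →L[ℝ] ℝ)
          (EuclideanSpace.single i (1:ℝ)) = if i = i0 then 1 else 0 := by
        rw [PiLp.proj_apply, EuclideanSpace.single_apply]
        simp [eq_comm]
      rw [hproj]
      simp only [smul_eq_mul]
      ring
    -- pointwise rewriting of the squeeze integrand
    have hpt : ∀ x : EuclideanSpace ℝ (Fin n),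
        (∑ α, v x α * ∑ i, Dv x α (EuclideanSpace.single i (1:ℝ)) *
          fderiv ℝ ζk x (EuclideanSpace.single i (1:ℝ))) = g x * χ k x + e k x := by
      intro x
      have inner : ∀ α : Fin q, (∑ i, Dv x α (EuclideanSpace.single i (1:ℝ)) *
          fderiv ℝ ζk x (EuclideanSpace.single i (1:ℝ)))
          = (∑ i, Dv x α (EuclideanSpace.single i (1:ℝ)) *
              fderiv ℝ ζ x (EuclideanSpace.single i (1:ℝ))) * χ k x
            + Dv x α (EuclideanSpace.single i0 (1:ℝ)) *
              (ζ x * (((k:ℝ)+1) * dσ (((k:ℝ)+1) * x i0 - 1))) := by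
        intro α
        have step : ∀ i : Fin n, Dv x α (EuclideanSpace.single i (1:ℝ)) *
            fderiv ℝ ζk x (EuclideanSpace.single i (1:ℝ))
            = Dv x α (EuclideanSpace.single i (1:ℝ)) *
                fderiv ℝ ζ x (EuclideanSpace.single i (1:ℝ)) * χ k x
              + (if i = i0 then Dv x α (EuclideanSpace.single i (1:ℝ)) *
                  (ζ x * (((k:ℝ)+1) * dσ (((k:ℝ)+1) * x i0 - 1))) else 0) := by
          intro i
          rw [happ x i]
          by_cases h : i = i0 <;> simp [h] <;> ring
        rw [Finset.sum_congr rfl (fun i _ => step i), Finset.sum_add_distrib,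
          ← Finset.sum_mul, Finset.sum_ite_eq' Finset.univ i0]
        simp
      calc (∑ α, v x α * ∑ i, Dv x α (EuclideanSpace.single i (1:ℝ)) *
            fderiv ℝ ζk x (EuclideanSpace.single i (1:ℝ)))
          = ∑ α, ((v x α * ∑ i, Dv x α (EuclideanSpace.single i (1:ℝ)) *
              fderiv ℝ ζ x (EuclideanSpace.single i (1:ℝ))) * χ k x
            + (v x α * Dv x α (EuclideanSpace.single i0 (1:ℝ))) *
              (ζ x * (((k:ℝ)+1) * dσ (((k:ℝ)+1) * x i0 - 1)))) :=
            Finset.sum_congr rfl fun α _ => by rw [inner α]; ring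
        _ = g x * χ k x + e k x := by
            rw [Finset.sum_add_distrib, ← Finset.sum_mul, ← Finset.sum_mul, hgdef, hedef]
    -- ζk is an admissible test function
    have hζk_cd : ContDiff ℝ 1 ζk := by
      refine hζ.mul ?_
      have hin : ContDiff ℝ 1 (fun y : EuclideanSpace ℝ (Fin n) => ((k:ℝ)+1) * y i0 - 1) :=
        by
          refine ContDiff.sub ?_ contDiff_const
          refine ContDiff.mul contDiff_const ?_
          exact (EuclideanSpace.proj (𝕜 := ℝ) i0).contDiff
      exact (Real.smoothTransition.contDiff (n := (1:ℕ∞))).comp hin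
    have hsupp : tsupport ζk ⊆ tsupport ζ ∩ {x : EuclideanSpace ℝ (Fin n) | 1/((k:ℝ)+1) ≤ x i0} := by
      refine closure_minimal ?_ ((isClosed_tsupport ζ).inter
        (isClosed_le continuous_const (EuclideanSpace.proj i0).continuous))
      intro x hx
      have hζx : ζ x ≠ 0 := fun h => hx (by simp [hζkdef, h])
      have hχx : χ k x ≠ 0 := fun h => hx (by simp [hζkdef, h])
      have hpos : 0 < ((k:ℝ)+1) * x i0 - 1 := by
        by_contra hle
        push_neg at hle
        exact hχx (Real.smoothTransition.zero_of_nonpos hle)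
      refine ⟨subset_closure hζx, ?_⟩
      rw [mem_setOf_eq, div_le_iff₀ hkpos, mul_comm]
      linarith
    have hcompact : IsCompact (tsupport ζk ∩ closure Ω) := by
      refine IsCompact.of_isClosed_subset (hζc.inter_right (isClosed_closure (s := Ω)))
        ((isClosed_tsupport ζk).inter isClosed_closure) ?_
      exact fun x hx => ⟨(hsupp hx.1).1, hx.2⟩
    have hsub : tsupport ζk ∩ closure Ω ⊆ Ω := by
      rintro x ⟨hx1, hx2⟩
      have h1 := hsupp hx1
      have h2 := hζbd ⟨h1.1, hx2⟩
      rcases h2 with h | h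
      · exact h
      · exfalso
        have : (0:ℝ) < 1/((k:ℝ)+1) := by positivity
        have hx0 := h1.2
        rw [mem_setOf_eq] at hx0 h
        rw [h] at hx0
        linarith
    have H := h_squash_int ζk hζk_cd hcompact hsub
    have hInt_gχ : Integrable (fun x => g x * χ k x) (volume.restrict Ω) :=
      integrable_of_contOn _ (hg_cont.mul (hχ_cont k).continuousOn)
    have hInt_e : Integrable (e k) (volume.restrict Ω) :=
      integrable_of_contOn _ (he_cont k)
    have hL : (∫ x in Ω, P x * ζ x * χ k x) = ∫ x in Ω, P x * ζk x :=
      integral_congr_ae (Filter.Eventually.of_forall fun x => by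
        simp only [hζkdef]; ring)
    rw [hL, H]
    congr 1
    rw [integral_congr_ae (Filter.Eventually.of_forall hpt)]
    exact integral_add hInt_gχ hInt_e
  -- convergence of the three pieces
  have hconv : ∀ f : EuclideanSpace ℝ (Fin n) → ℝ, ContinuousOn f (closure Ω) →
      Tendsto (fun k => ∫ x in Ω, f x * χ k x) atTop (nhds (∫ x in Ω, f x)) := by
    intro f hf
    obtain ⟨C, hC⟩ := hclΩ.exists_bound_of_continuousOn hf
    refine tendsto_integral_of_dominated_convergence (fun _ => C)
      (fun k => ((hf.mono subset_closure).mul (hχ_cont k).continuousOn).aestronglyMeasurable hΩm)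
      (integrable_const C)
      (fun k => (ae_restrict_iff' hΩm).2 (Filter.Eventually.of_forall fun x hx => ?_))
      ((ae_restrict_iff' hΩm).2 (Filter.Eventually.of_forall fun x hx => ?_))
    · have h1 := hC x (subset_closure hx)
      have h2 := hχ01 k x
      calc ‖f x * χ k x‖ = ‖f x‖ * ‖χ k x‖ := norm_mul _ _
        _ ≤ C * 1 := by
            refine mul_le_mul h1 ?_ (norm_nonneg _) ((norm_nonneg _).trans h1)
            rw [Real.norm_eq_abs, abs_le]
            exact ⟨by linarith [h2.1], h2.2⟩
        _ = C := mul_one C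
    · have hx0 : 0 < x i0 := hΩpos x hx
      apply tendsto_const_nhds.congr'
      filter_upwards [eventually_ge_atTop ⌈2 / x i0⌉₊] with k hk
      have h2 : (2 / x i0 : ℝ) ≤ (k:ℝ) + 1 := by
        refine le_trans (Nat.le_ceil _) ?_
        have : ((⌈2 / x i0⌉₊ : ℕ) : ℝ) ≤ (k : ℝ) := Nat.cast_le.2 hk
        linarith
      have harg : (1:ℝ) ≤ ((k:ℝ)+1) * x i0 - 1 := by
        have h3 := (div_le_iff₀ hx0).1 h2
        nlinarith
      have : χ k x = 1 := by
        simp only [hχdef]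
        exact Real.smoothTransition.one_of_one_le harg
      rw [this, mul_one]
  have hA : Tendsto (fun k => ∫ x in Ω, P x * ζ x * χ k x) atTop
      (nhds (∫ x in Ω, P x * ζ x)) :=
    hconv (fun x => P x * ζ x) (hP_cont.mul hζ.continuous.continuousOn)
  have hB : Tendsto (fun k => ∫ x in Ω, g x * χ k x) atTop (nhds (∫ x in Ω, g x)) :=
    hconv g hg_cont
  have hE : Tendsto (fun k => ∫ x in Ω, e k x) atTop (nhds 0) := by
    obtain ⟨M, hM0, hM⟩ := deriv_smoothTransition_bound
    obtain ⟨C3, hC3⟩ := hclΩ.exists_bound_of_continuousOn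
      (continuousOn_finset_sum Finset.univ
        (fun (α : Fin q) _ => (hDvα α (EuclideanSpace.single i0 (1:ℝ))).abs)
        : ContinuousOn (fun x => ∑ α, |Dv x α (EuclideanSpace.single i0 (1:ℝ))|) (closure Ω))
    set C3' : ℝ := max C3 0 with hC3'def
    have hC3'nn : 0 ≤ C3' := le_max_right _ _
    have hC3' : ∀ x ∈ closure Ω, ∀ α : Fin q, |Dv x α (EuclideanSpace.single i0 (1:ℝ))| ≤ C3' := by
      intro x hx α
      have h1 : ∑ β, |Dv x β (EuclideanSpace.single i0 (1:ℝ))| ≤ C3' := by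
        have := hC3 x hx
        rw [Real.norm_eq_abs] at this
        exact le_trans (le_abs_self _) (le_trans this (le_max_left _ _))
      refine le_trans ?_ h1
      exact Finset.single_le_sum (f := fun β : Fin q => |Dv x β (EuclideanSpace.single i0 (1:ℝ))|)
        (fun β _ => abs_nonneg _) (Finset.mem_univ α)
    obtain ⟨Cζ, hCζ⟩ := hζc.exists_bound_of_continuous hζ.continuous
    have hCζnn : 0 ≤ Cζ := le_trans (norm_nonneg (ζ 0)) (hCζ 0)
    set CE : ℝ := C3' * Cζ * M * 2 * 2^(n-1) with hCEdef
    have hCEnn : 0 ≤ CE := by positivity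
    have hvabs_cont : ContinuousOn (fun x => ∑ α, |v x α|) (closure Ω) :=
      continuousOn_finset_sum Finset.univ (fun α _ => (hvα α).abs)
    rw [NormedAddCommGroup.tendsto_nhds_zero]
    intro ε hε
    set δ : ℝ := ε / (2 * (CE + 1)) with hδdef
    have hδpos : 0 < δ := by positivity
    obtain ⟨r, hr0, hr⟩ := small_on_thin (hclΩ.inter_right (isClosed_tsupport ζ))
      (hvabs_cont.mono inter_subset_left) (EuclideanSpace.proj i0).continuous
      (fun x hx => hclpos x hx.1)
      (fun x hx hx0 => by
        have hzero : v x = 0 := hv_bdry x hx.1 hx0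
        simp [hzero]) hδpos
    obtain ⟨N, hN⟩ := exists_nat_gt (2/r)
    filter_upwards [eventually_ge_atTop N] with k hk
    have hkpos : (0:ℝ) < (k:ℝ)+1 := by positivity
    have hk1 : (2:ℝ)/((k:ℝ)+1) < r := by
      rw [div_lt_iff₀ hkpos]
      have h1 : (2:ℝ)/r < (k:ℝ)+1 := by
        have : (N:ℝ) ≤ (k:ℝ) := Nat.cast_le.2 hk
        linarith
      have h2 := (div_lt_iff₀ hr0).1 h1
      nlinarith
    set S : Set (EuclideanSpace ℝ (Fin n)) := {x | x i0 ≤ 2/((k:ℝ)+1)} with hSdef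
    have hSm : MeasurableSet S :=
      measurableSet_le (EuclideanSpace.proj i0).continuous.measurable measurable_const
    set ck : ℝ := δ * C3' * (Cζ * (((k:ℝ)+1) * M)) with hckdef
    have hcknn : 0 ≤ ck := by positivity
    -- pointwise bound
    have hbd : ∀ x ∈ Ω, ‖e k x‖ ≤ S.indicator (fun _ => ck) x := by
      intro x hx
      by_cases hxS : x ∈ S
      · rw [indicator_of_mem hxS]
        by_cases hζx : ζ x = 0
        · rw [hedef]
          simp only [hζx]
          simp [hcknn]
        · have hxts : x ∈ tsupport ζ := subset_tsupport ζ hζx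
          have hxcl : x ∈ closure Ω := subset_closure hx
          have hsm : ∑ α, |v x α| ≤ δ := by
            have := hr x ⟨hxcl, hxts⟩ (lt_of_le_of_lt hxS hk1)
            exact le_trans (le_abs_self _) this
          have h1 : |∑ α, v x α * Dv x α (EuclideanSpace.single i0 (1:ℝ))| ≤ δ * C3' := by
            calc |∑ α, v x α * Dv x α (EuclideanSpace.single i0 (1:ℝ))|
                ≤ ∑ α, |v x α * Dv x α (EuclideanSpace.single i0 (1:ℝ))| :=
                  Finset.abs_sum_le_sum_abs _ _
              _ = ∑ α, |v x α| * |Dv x α (EuclideanSpace.single i0 (1:ℝ))| := by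
                  simp [abs_mul]
              _ ≤ ∑ α, |v x α| * C3' := by
                  refine Finset.sum_le_sum fun α _ => ?_
                  exact mul_le_mul_of_nonneg_left (hC3' x hxcl α) (abs_nonneg _)
              _ = (∑ α, |v x α|) * C3' := by rw [Finset.sum_mul]
              _ ≤ δ * C3' := mul_le_mul_of_nonneg_right hsm hC3'nn
          have heq : ‖e k x‖ = |∑ α, v x α * Dv x α (EuclideanSpace.single i0 (1:ℝ))| *
              (|ζ x| * (((k:ℝ)+1) * |dσ (((k:ℝ)+1) * x i0 - 1)|)) := by
            rw [hedef]
            simp only [Real.norm_eq_abs, abs_mul]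
            rw [abs_of_pos hkpos]
          rw [heq, hckdef]
          have h2 : |ζ x| ≤ Cζ := by rw [← Real.norm_eq_abs]; exact hCζ x
          have h3 : |dσ (((k:ℝ)+1) * x i0 - 1)| ≤ M := by rw [hdσdef]; exact hM _
          gcongr
      · rw [indicator_of_notMem hxS]
        have harg : 1 < ((k:ℝ)+1) * x i0 - 1 := by
          rw [hSdef, mem_setOf_eq, not_le] at hxS
          have h2 := (div_lt_iff₀ hkpos).1 hxS
          nlinarith
        have hz : dσ (((k:ℝ)+1) * x i0 - 1) = 0 := by
          rw [hdσdef]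
          refine deriv_smoothTransition_eq_zero _ ?_
          rw [Set.mem_Icc, not_and_or]
          right; linarith
        rw [hedef]
        simp [hz]
    -- integral bound
    have hnorm : ‖∫ x in Ω, e k x‖ ≤ ck * (volume (S ∩ Ω)).toReal := by
      calc ‖∫ x in Ω, e k x‖ ≤ ∫ x in Ω, ‖e k x‖ := norm_integral_le_integral_norm _
        _ ≤ ∫ x in Ω, S.indicator (fun _ => ck) x := by
            refine integral_mono_of_nonneg
              (Filter.Eventually.of_forall fun x => norm_nonneg _)
              ((integrable_const ck).indicator hSm)
              ((ae_restrict_iff' hΩm).2 (Filter.Eventually.of_forall hbd))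
        _ = ck * (volume (S ∩ Ω)).toReal := by
            rw [integral_indicator_const _ hSm, measureReal_def, Measure.restrict_apply hSm,
              smul_eq_mul, mul_comm]
    have hSvol : (volume (S ∩ Ω)).toReal ≤ (2/((k:ℝ)+1)) * 2^(n-1) := by
      have hsub2 : S ∩ Ω ⊆ {x : EuclideanSpace ℝ (Fin n) |
          (0 < x i0 ∧ x i0 ≤ 2/((k:ℝ)+1)) ∧ ∀ i, |x i| < 1} := by
        rintro x ⟨hxS, hxΩ⟩
        refine ⟨⟨hΩpos x hxΩ, hxS⟩, fun i => ?_⟩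
        exact lt_of_le_of_lt (abs_coord_le_norm x i) (mem_ball_zero_iff.1 (hΩball hxΩ))
      have h1 := le_trans (measure_mono hsub2)
        (strip_volume n i0 (2/((k:ℝ)+1)) (by positivity))
      have hne : ENNReal.ofReal (2/((k:ℝ)+1)) * (ENNReal.ofReal 2)^(n-1) ≠ ⊤ :=
        ENNReal.mul_ne_top ENNReal.ofReal_ne_top (ENNReal.pow_ne_top ENNReal.ofReal_ne_top)
      calc (volume (S ∩ Ω)).toReal
          ≤ (ENNReal.ofReal (2/((k:ℝ)+1)) * (ENNReal.ofReal 2)^(n-1)).toReal :=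
            ENNReal.toReal_mono hne h1
        _ = (2/((k:ℝ)+1)) * 2^(n-1) := by
            rw [ENNReal.toReal_mul, ENNReal.toReal_pow,
              ENNReal.toReal_ofReal (by positivity), ENNReal.toReal_ofReal (by norm_num)]
    have hfin2 : ‖∫ x in Ω, e k x‖ ≤ δ * CE := by
      calc ‖∫ x in Ω, e k x‖ ≤ ck * (volume (S ∩ Ω)).toReal := hnorm
        _ ≤ ck * ((2/((k:ℝ)+1)) * 2^(n-1)) := by
            exact mul_le_mul_of_nonneg_left hSvol hcknn
        _ = δ * CE := by
            rw [hckdef, hCEdef]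
            field_simp
    have hlast : δ * CE < ε := by
      rw [hδdef]
      rw [div_mul_eq_mul_div, div_lt_iff₀ (by positivity : (0:ℝ) < 2 * (CE + 1))]
      nlinarith
    exact lt_of_le_of_lt hfin2 hlast
  have hA' : Tendsto (fun k => ∫ x in Ω, P x * ζ x * χ k x) atTop
      (nhds (-(∫ x in Ω, g x))) := by
    have h2 : Tendsto (fun k => -((∫ x in Ω, g x * χ k x) + ∫ x in Ω, e k x)) atTop
        (nhds (-((∫ x in Ω, g x) + 0))) := (hB.add hE).neg
    rw [add_zero] at h2
    exact h2.congr fun k => (key k).symm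
  have hfinal := tendsto_nhds_unique hA hA'
  calc ∫ x in Ω, P x * ζ x = -(∫ x in Ω, g x) := hfinal
    _ = _ := rfl
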